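/- Let E be a topological graph and let (ψ, π) be a Toeplitz representation of E in a C*-algebra B. Then for all x, y ∈ C_c(E¹) and every g ∈ C₀(E⁰) satisfying g(v) = Σ_{e : s(e) = v} conj(x(e)) y(e) for all v ∈ E⁰, one has π(g) = ψ(x)* ψ(y). Consequently ψ is bounded for the norm ‖·‖_{C₀(E⁰)}: ‖ψ(x)‖ ≤ ‖x‖_{C₀(E⁰)} for all x ∈ C_c(E¹). -/

import Mathlib

open scoped ZeroAtInfty CompactlySupported ComplexOrder

noncomputable section

namespace TopGraphPaper

variable {V G : Type*} [TopologicalSpace V] [TopologicalSpace G]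

/-- The set `E⁰_fin` of vertices having a neighbourhood `N` with `r⁻¹(N)` compact. -/
def Efin (r : G → V) : Set V := {v | ∃ N ∈ nhds v, IsCompact (r ⁻¹' N)}

/-- The set `E⁰_sce = E⁰ \ closure (r(E¹))`. -/
def Esce (r : G → V) : Set V := (closure (Set.range r))ᶜ

/-- The set `E⁰_rg = E⁰_fin \ closure (E⁰_sce)`. -/
def Erg (r : G → V) : Set V := Efin r \ closure (Esce r)

/-- `U ⊆ E¹` is an `s`-section if `s` restricted to `U` is a homeomorphism onto its image. -/
def IsSSection (s : G → V) (U : Set G) : Prop := Topology.IsEmbedding (U.restrict s)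

/-- A complex-valued function is nonnegative if all its values are nonnegative reals. -/
def NonnegFn {α : Type*} (x : α → ℂ) : Prop := ∀ a, 0 ≤ x a

/-- The norm `‖x‖_{C₀(E⁰)} = sup_v √(Σ_{s e = v} |x e|²)` on `C_c(E¹)`. -/
def gnorm (s : G → V) (x : G → ℂ) : ℝ :=
  ⨆ v : V, Real.sqrt (∑' e : (s ⁻¹' {v} : Set G), ‖x (e : G)‖ ^ 2)

variable {B : Type*} [NonUnitalCStarAlgebra B]

/-- A Toeplitz representation of the topological graph `(V, G, r, s)` in the C*-algebra `B`. -/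
structure IsToeplitzRep (r s : G → V) (ψ : C_c(G, ℂ) →ₗ[ℂ] B)
    (π : C₀(V, ℂ) →⋆ₙₐ[ℂ] B) : Prop where
  act : ∀ (f : C₀(V, ℂ)) (x y : C_c(G, ℂ)), (∀ e, y e = f (r e) * x e) → ψ y = π f * ψ x
  inner : ∀ (x : C_c(G, ℂ)) (U : Set G), IsOpen U → IsSSection s U → tsupport ⇑x ⊆ U →
    ∀ g : C₀(V, ℂ), (∀ e, x e ≠ 0 → g (s e) = (‖x e‖ : ℂ) ^ 2) →
      (∀ v, v ∉ s '' Function.support ⇑x → g v = 0) → π g = star (ψ x) * ψ x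
  orth : ∀ (x y : C_c(G, ℂ)) (Ux Uy : Set G), IsOpen Ux → IsOpen Uy →
    IsSSection s Ux → IsSSection s Uy → Disjoint Ux Uy →
    tsupport ⇑x ⊆ Ux → tsupport ⇑y ⊆ Uy → star (ψ x) * ψ y = 0

/-- Covariance of a Toeplitz representation.  Here, for each `f` in the generating family `𝒢`,
the function `gN N` plays the role of `√(f_N)`, so that `f_N = (gN N)^2`. -/
def IsCovariant (r s : G → V) (ψ : C_c(G, ℂ) →ₗ[ℂ] B) (π : C₀(V, ℂ) →⋆ₙₐ[ℂ] B) : Prop :=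
  ∃ 𝒢 : Set C₀(V, ℂ),
    (∀ f ∈ 𝒢, HasCompactSupport ⇑f ∧ NonnegFn ⇑f ∧ tsupport ⇑f ⊆ Erg r) ∧
    closure ((NonUnitalStarAlgebra.adjoin ℂ 𝒢 : NonUnitalStarSubalgebra ℂ C₀(V, ℂ)) :
        Set C₀(V, ℂ)) = {f : C₀(V, ℂ) | ∀ v ∉ Erg r, f v = 0} ∧
    ∀ f ∈ 𝒢, ∃ (𝒩 : Finset (Set G)) (gN : Set G → C_c(G, ℂ)),
      (∀ N ∈ 𝒩, IsOpen N ∧ IsSSection s N) ∧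
      r ⁻¹' tsupport ⇑f ⊆ ⋃ N ∈ 𝒩, N ∧
      (∀ N ∈ 𝒩, NonnegFn ⇑(gN N) ∧
        Function.support ⇑(gN N) ⊆ N ∩ r ⁻¹' tsupport ⇑f) ∧
      (∀ e, ∑ N ∈ 𝒩, (gN N e) ^ 2 = f (r e)) ∧
      π f = ∑ N ∈ 𝒩, ψ (gN N) * star (ψ (gN N))

/-- A local `r`-fibration `(𝒰, W)`. -/
structure IsLocalRFib (r s : G → V) (𝒰 : Finset (Set G)) (W : Set V) : Prop where
  disj : (𝒰 : Set (Set G)).Pairwise Disjoint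
  sSec : ∀ U ∈ 𝒰, IsSSection s U
  rSec : ∀ U ∈ 𝒰, IsSSection r U
  pre : r ⁻¹' W = ⋃ U ∈ 𝒰, U
  ran : ∀ U ∈ 𝒰, r '' U = W

/-- An open local `r`-fibration. -/
def IsOpenLocalRFib (r s : G → V) (𝒰 : Finset (Set G)) (W : Set V) : Prop :=
  IsLocalRFib r s 𝒰 W ∧ IsOpen W ∧ ∀ U ∈ 𝒰, IsOpen U

/-- A precompact local `r`-fibration. -/
def IsPrecompactLocalRFib (r s : G → V) (𝒰 : Finset (Set G)) (W : Set V) : Prop :=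
  IsLocalRFib r s 𝒰 W ∧ IsCompact (closure W) ∧ ∀ U ∈ 𝒰, IsCompact (closure U)


variable {V G : Type*} [TopologicalSpace V] [TopologicalSpace G]

/-- The space `Eⁿ` of paths of length `n`, as a subset of `(E¹)ⁿ`. -/
def PathSet (r s : G → V) (n : ℕ) : Set (Fin n → G) :=
  {μ | ∀ (i : ℕ) (h : i + 1 < n), s (μ ⟨i, by omega⟩) = r (μ ⟨i + 1, h⟩)}

/-- The function `x₁ ◇ ⋯ ◇ xₙ` on `(E¹)ⁿ`. -/
def diam {n : ℕ} (x : Fin n → C_c(G, ℂ)) (μ : Fin n → G) : ℂ := ∏ i, x i (μ i)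

/-- `lprod a [b₁,…,bₖ] = a * b₁ * ⋯ * bₖ` (products in a possibly non-unital ring). -/
def lprod {M : Type*} [Mul M] : M → List M → M
  | a, [] => a
  | a, b :: l => lprod (a * b) l

/-- The product `F 0 * F 1 * ⋯ * F (n-1)` for `n ≥ 1`. -/
def finProd {M : Type*} [Mul M] {n : ℕ} (hn : 0 < n) (F : Fin n → M) : M :=
  lprod (F ⟨0, hn⟩) (List.ofFn fun i : Fin (n - 1) => F ⟨(i : ℕ) + 1, by omega⟩)

/-- The infinite path space `E^∞`. -/
def InfPath (r s : G → V) : Type _ := {z : ℕ → G // ∀ i, s (z i) = r (z (i + 1))}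

instance (r s : G → V) : TopologicalSpace (InfPath r s) :=
  inferInstanceAs (TopologicalSpace {z : ℕ → G // ∀ i, s (z i) = r (z (i + 1))})

/-- The shift map `σ : E^∞ → E^∞`. -/
def shift (r s : G → V) : InfPath r s → InfPath r s :=
  fun z => ⟨fun i => z.1 (i + 1), fun i => z.2 (i + 1)⟩

/-- A list of edges is a (finite) path when consecutive edges compose. -/
def IsPathL (r s : G → V) (μ : List G) : Prop := μ.Chain' fun e f => s e = r f

/-- The cylinder set `Z(μ)` of a finite path `μ` of positive length. -/
def cylP (r s : G → V) (μ : List G) : Set (InfPath r s) :=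
  {z | ∀ (i : ℕ) (h : i < μ.length), z.1 i = μ.get ⟨i, h⟩}

/-- The cylinder set `Z(v)` of a vertex `v`. -/
def cylV (r s : G → V) (v : V) : Set (InfPath r s) := {z | r (z.1 0) = v}

/-- `t_μ`, with the convention `t_v = q_v` for paths `μ` of length zero based at `v`. -/
def tPath {M : Type*} [Mul M] (Q : V → M) (T : G → M) (v : V) : List G → M
  | [] => Q v
  | e :: l => lprod (T e) (l.map T)

variable {B : Type*} [NonUnitalCStarAlgebra B]

/-- A Cuntz–Krieger `E`-family in `B`. -/
structure IsCKFamily (r s : G → V) (Q : V → B) (T : G → B) : Prop where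
  proj : ∀ v, star (Q v) = Q v ∧ Q v * Q v = Q v
  orth : ∀ v w, v ≠ w → Q v * Q w = 0
  srce : ∀ e, star (T e) * T e = Q (s e)
  ck : ∀ (v : V) (F : Finset G), (∀ e, e ∈ F ↔ r e = v) → Q v = ∑ e ∈ F, T e * star (T e)



/-! ### Auxiliary lemmas for Statement 4 -/

section Statement4Aux

set_option linter.unusedSectionVars false

variable {V G : Type*} [TopologicalSpace V] [TopologicalSpace G] {s : G → V}

lemma IsSSection.injOn {U : Set G} (h : IsSSection s U) : Set.InjOn s U :=
  Set.injOn_iff_injective.mpr h.injective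

lemma IsSSection.mono' {U U' : Set G} (h : IsSSection s U) (hsub : U' ⊆ U) :
    IsSSection s U' := by
  have : U'.restrict s = (U.restrict s) ∘ Set.inclusion hsub := rfl
  rw [IsSSection, this]
  exact h.comp (Topology.IsEmbedding.inclusion hsub)

lemma tsum_fiber_eq {U : Set G} (hinj : Set.InjOn s U) {F : G → ℂ}
    (hF : Function.support F ⊆ U) {e : G} (heU : e ∈ U) :
    ∑' e' : (s ⁻¹' {s e} : Set G), F (e' : G) = F e := by
  refine tsum_eq_single (⟨e, rfl⟩ : (s ⁻¹' {s e} : Set G)) ?_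
  rintro ⟨e', he'⟩ hne
  by_contra h0
  have he'U : e' ∈ U := hF h0
  have : e' = e := hinj he'U heU (by simpa using he')
  exact hne (by simp [this])

lemma tsum_fiber_zero {F : G → ℂ} {v : V} (h : ∀ e, s e = v → F e = 0) :
    ∑' e : (s ⁻¹' {v} : Set G), F (e : G) = 0 := by
  have : ∀ e : (s ⁻¹' {v} : Set G), F (e : G) = 0 := fun e => h e e.2
  rw [tsum_congr this, tsum_zero]

lemma invFunOn_tendsto [Nonempty G] {U : Set G} (hsec : IsSSection s U)
    (hsU : IsOpen (s '' U)) {v : V} (hv : v ∈ s '' U) {O : Set G} (hO : IsOpen O)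
    (hmem : Function.invFunOn s U v ∈ O) :
    ∀ᶠ v' in nhds v, v' ∈ s '' U ∧ Function.invFunOn s U v' ∈ O := by
  obtain ⟨e₀, he₀U, he₀⟩ := hv
  have hex : ∃ a ∈ U, s a = v := ⟨e₀, he₀U, he₀⟩
  have hmemU : Function.invFunOn s U v ∈ U := Function.invFunOn_mem hex
  have happ : s (Function.invFunOn s U v) = v := Function.invFunOn_eq hex
  have hopen : IsOpen ((Subtype.val : U → G) ⁻¹' O) := hO.preimage continuous_subtype_val
  rw [hsec.1.eq_induced] at hopen
  obtain ⟨W, hWopen, hW⟩ := hopen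
  have hvW : v ∈ W := by
    have : (⟨Function.invFunOn s U v, hmemU⟩ : U) ∈ (Subtype.val : U → G) ⁻¹' O := hmem
    rw [← hW] at this
    rw [← happ]; exact this
  have : W ∩ s '' U ∈ nhds v := (hWopen.inter hsU).mem_nhds ⟨hvW, ⟨_, hmemU, happ⟩⟩
  filter_upwards [this] with v' ⟨hv'W, hv'sU⟩
  refine ⟨hv'sU, ?_⟩
  have hex' : ∃ a ∈ U, s a = v' := by obtain ⟨e, he, h⟩ := hv'sU; exact ⟨e, he, h⟩
  have h1 : Function.invFunOn s U v' ∈ U := Function.invFunOn_mem hex'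
  have h2 : s (Function.invFunOn s U v') = v' := Function.invFunOn_eq hex'
  have : (⟨Function.invFunOn s U v', h1⟩ : U) ∈ (Subtype.val : U → G) ⁻¹' O := by
    rw [← hW]; show s (Function.invFunOn s U v') ∈ W; rw [h2]; exact hv'W
  exact this

/-- Extension by zero through a section gives a `C₀` function computing fiber sums. -/
lemma existsC0 [T2Space V] (hs : IsLocalHomeomorph s) {U : Set G} (hU : IsOpen U)
    (hsec : IsSSection s U) (F : G → ℂ) (hF : Continuous F) (hFc : HasCompactSupport F)
    (hFU : tsupport F ⊆ U) :
    ∃ g : C₀(V, ℂ), ∀ v, g v = ∑' e : (s ⁻¹' {v} : Set G), F (e : G) := by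
  classical
  cases isEmpty_or_nonempty G with
  | inl h =>
    refine ⟨0, fun v => ?_⟩
    haveI : IsEmpty (s ⁻¹' {v} : Set G) := ⟨fun e => isEmptyElim (e : G)⟩
    simp [tsum_empty]
  | inr h => ?_
  set σ := Function.invFunOn s U with hσdef
  set g0 : V → ℂ := (s '' U).indicator (fun v => F (σ v)) with hg0
  have hsupF : Function.support F ⊆ U := subset_trans subset_closure hFU
  have hsU : IsOpen (s '' U) := hs.isOpenMap U hU
  have key : ∀ v, g0 v = ∑' e : (s ⁻¹' {v} : Set G), F (e : G) := by
    intro v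
    by_cases hv : v ∈ s '' U
    · have hex : ∃ a ∈ U, s a = v := by obtain ⟨e, he, h⟩ := hv; exact ⟨e, he, h⟩
      have h1 : σ v ∈ U := Function.invFunOn_mem hex
      have h2 : s (σ v) = v := Function.invFunOn_eq hex
      have := tsum_fiber_eq hsec.injOn hsupF h1 (F := F)
      rw [h2] at this
      rw [this, hg0, Set.indicator_of_mem hv]
    · rw [hg0, Set.indicator_of_notMem hv, tsum_fiber_zero]
      intro e he
      by_contra h0
      exact hv ⟨e, hsupF h0, he⟩
  have hg0supp : ∀ v ∉ s '' tsupport F, g0 v = 0 := by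
    intro v hv
    by_contra h0
    have hvU : v ∈ s '' U := by
      by_contra h; rw [hg0, Set.indicator_of_notMem h] at h0; exact h0 rfl
    rw [hg0, Set.indicator_of_mem hvU] at h0
    have hex : ∃ a ∈ U, s a = v := by obtain ⟨e, he, h⟩ := hvU; exact ⟨e, he, h⟩
    exact hv ⟨σ v, subset_closure h0, Function.invFunOn_eq hex⟩
  have hKc : IsCompact (s '' tsupport F) := hFc.image hs.continuous
  have hcont : Continuous g0 := by
    rw [continuous_iff_continuousAt]
    intro v
    by_cases hv : v ∈ s '' U
    · unfold ContinuousAt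
      rw [Filter.tendsto_def]
      intro O' hO'
      rw [hg0, Set.indicator_of_mem hv] at hO'
      obtain ⟨O, hOsub, hOopen, hmem⟩ := mem_nhds_iff.mp (hF.continuousAt.preimage_mem_nhds hO')
      filter_upwards [invFunOn_tendsto hsec hsU hv hOopen hmem] with v' ⟨h1, h2⟩
      show g0 v' ∈ O'
      rw [hg0]
      rw [Set.indicator_of_mem h1]
      exact hOsub h2
    · have hvK : v ∉ s '' tsupport F := fun h => hv (Set.image_mono hFU h)
      have : ∀ᶠ v' in nhds v, g0 v' = 0 :=
        Filter.eventually_of_mem ((hKc.isClosed.isOpen_compl).mem_nhds hvK)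
          (fun v' hv' => hg0supp v' hv')
      have h0 : g0 v = 0 := hg0supp v hvK
      rw [ContinuousAt, h0]
      exact Filter.Tendsto.congr' (this.mono fun a ha => ha.symm) tendsto_const_nhds
  have hgc : HasCompactSupport g0 := HasCompactSupport.intro hKc hg0supp
  exact ⟨⟨⟨g0, hcont⟩, hgc.is_zero_at_infty⟩, key⟩

lemma fiber_inter_finite [T2Space V] (hs : IsLocalHomeomorph s) {K : Set G}
    (hK : IsCompact K) (v : V) : (K ∩ s ⁻¹' {v}).Finite := by
  have hcl : IsClosed (s ⁻¹' {v}) := isClosed_singleton.preimage hs.continuous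
  have hA : IsCompact (K ∩ s ⁻¹' {v}) := hK.inter_right hcl
  have hnb : ∀ e : G, ∃ U : Set G, IsOpen U ∧ e ∈ U ∧ Set.InjOn s U := by
    intro e
    obtain ⟨p, hp, hps⟩ := hs e
    exact ⟨p.source, p.open_source, hp, by
      intro a ha b hb hab
      exact p.injOn ha hb (by rw [← hps]; exact hab)⟩
  choose U hUopen hUmem hUinj using hnb
  obtain ⟨t, ht⟩ := hA.elim_finite_subcover
    (fun e : (K ∩ s ⁻¹' {v} : Set G) => U (e : G)) (fun e => hUopen _)
    (fun e he => Set.mem_iUnion.mpr ⟨⟨e, he⟩, hUmem e⟩)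
  refine Set.Finite.subset
    (t.finite_toSet.image (fun e : (K ∩ s ⁻¹' {v} : Set G) => (e : G))) ?_
  intro a ha
  obtain ⟨e, het, haU⟩ := Set.mem_iUnion₂.mp (ht ha)
  have : a = (e : G) := by
    have h1 : s a = v := ha.2
    have h2 : s (e : G) = v := e.2.2
    exact hUinj (e : G) haU (hUmem _) (by rw [h1, h2])
  exact ⟨e, het, this.symm⟩

lemma summable_fiber [T2Space V] {α : Type*} [AddCommGroup α] [TopologicalSpace α]
    [IsTopologicalAddGroup α] (hs : IsLocalHomeomorph s) {F : G → α} {K : Set G}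
    (hK : IsCompact K) (hsup : Function.support F ⊆ K) (v : V) :
    Summable (fun e : (s ⁻¹' {v} : Set G) => F (e : G)) := by
  have hfin : ((Subtype.val : (s ⁻¹' {v} : Set G) → G) ⁻¹' (K ∩ s ⁻¹' {v})).Finite :=
    Set.Finite.preimage (Set.injOn_of_injective Subtype.val_injective)
      (fiber_inter_finite hs hK v)
  refine summable_of_ne_finset_zero (s := hfin.toFinset) ?_
  intro e he
  by_contra h0
  exact he (hfin.mem_toFinset.mpr ⟨hsup h0, e.2⟩)

lemma polarC (a b : ℂ) :
    (1/4 : ℂ) * (‖a + b‖ : ℂ)^2 + (-Complex.I/4) * (‖a + Complex.I * b‖ : ℂ)^2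
      + (-1/4 : ℂ) * (‖a - b‖ : ℂ)^2 + (Complex.I/4) * (‖a - Complex.I * b‖ : ℂ)^2
      = (starRingEnd ℂ) a * b := by
  have key : ∀ w : ℂ, (‖w‖ : ℂ)^2 = (starRingEnd ℂ) w * w := by
    intro w
    rw [← Complex.normSq_eq_conj_mul_self, Complex.normSq_eq_norm_sq]
    push_cast
    ring
  simp only [key, map_add, map_sub, map_mul, Complex.conj_I]
  ring_nf
  simp [Complex.ext_iff]
  ring_nf
  constructor <;> trivial

lemma polarB {B : Type*} [NonUnitalCStarAlgebra B] (a b : B) :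
    (1/4 : ℂ) • (star (a + b) * (a + b))
      + (-Complex.I/4) • (star (a + Complex.I • b) * (a + Complex.I • b))
      + (-1/4 : ℂ) • (star (a - b) * (a - b))
      + (Complex.I/4) • (star (a - Complex.I • b) * (a - Complex.I • b))
      = star a * b := by
  simp only [star_add, star_sub, star_smul, Complex.star_def, Complex.conj_I, add_mul, mul_add,
    sub_mul, mul_sub, smul_mul_assoc, mul_smul_comm, smul_smul, smul_sub, smul_add, neg_smul,
    neg_mul, neg_neg]
  match_scalars <;> simp [Complex.ext_iff] <;> norm_num

/-- Multiplication of a compactly supported function by a continuous real function. -/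
def mulCc (φ : G → ℝ) (hφ : Continuous φ) (x : C_c(G, ℂ)) : C_c(G, ℂ) :=
  ⟨⟨fun e => (φ e : ℂ) * x e, (Complex.continuous_ofReal.comp hφ).mul (map_continuous x)⟩,
    x.hasCompactSupport'.mono (by
      intro e he
      simp only [Function.mem_support] at he ⊢
      exact fun h => he (mul_eq_zero.mpr (Or.inr h)))⟩

@[simp] lemma mulCc_apply (φ : G → ℝ) (hφ : Continuous φ) (x : C_c(G, ℂ)) (e : G) :
    mulCc φ hφ x e = (φ e : ℂ) * x e := rfl

end Statement4Aux


section Statement4Main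

set_option linter.unusedSectionVars false
set_option maxHeartbeats 1000000

variable {V G : Type*} [TopologicalSpace V] [TopologicalSpace G]
    [LocallyCompactSpace V] [T2Space V] [LocallyCompactSpace G] [T2Space G]
    {r s : G → V} {B : Type*} [NonUnitalCStarAlgebra B]
    {ψ : C_c(G, ℂ) →ₗ[ℂ] B} {π : C₀(V, ℂ) →⋆ₙₐ[ℂ] B}

lemma inner_formula (hs : IsLocalHomeomorph s) (hT : IsToeplitzRep r s ψ π)
    {U : Set G} (hU : IsOpen U) (hsec : IsSSection s U) (z : C_c(G, ℂ))
    (hz : tsupport ⇑z ⊆ U) :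
    ∃ g : C₀(V, ℂ), (∀ v, g v = ∑' e : (s ⁻¹' {v} : Set G), ((‖z (e : G)‖ : ℝ) : ℂ)^2)
      ∧ π g = star (ψ z) * ψ z := by
  set F : G → ℂ := fun e => ((‖z e‖ : ℝ) : ℂ)^2 with hFdef
  have hFsupp : Function.support F ⊆ Function.support ⇑z := by
    intro e he
    simp only [Function.mem_support, hFdef] at he ⊢
    intro h; exact he (by simp [h])
  have hFc : HasCompactSupport F := z.hasCompactSupport'.mono hFsupp
  have hFU : tsupport F ⊆ U := (closure_mono hFsupp).trans hz
  have hsupFU : Function.support F ⊆ U := subset_trans subset_closure hFU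
  have hFcont : Continuous F := (Complex.continuous_ofReal.comp (map_continuous z).norm).pow 2
  obtain ⟨g, hg⟩ := existsC0 hs hU hsec F hFcont hFc hFU
  refine ⟨g, hg, ?_⟩
  refine hT.inner z U hU hsec hz g ?_ ?_
  · intro e hze
    have heU : e ∈ U := hz (subset_closure hze)
    rw [hg (s e), tsum_fiber_eq hsec.injOn hsupFU heU]
  · intro v hv
    rw [hg v, tsum_fiber_zero]
    intro e he
    by_contra h0
    exact hv ⟨e, hFsupp h0, he⟩

lemma single_section (hs : IsLocalHomeomorph s) (hT : IsToeplitzRep r s ψ π)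
    {U : Set G} (hU : IsOpen U) (hsec : IsSSection s U) (x y : C_c(G, ℂ))
    (hx : tsupport ⇑x ⊆ U) (hy : tsupport ⇑y ⊆ U) :
    ∃ g : C₀(V, ℂ),
      (∀ v, g v = ∑' e : (s ⁻¹' {v} : Set G), (starRingEnd ℂ) (x (e : G)) * y (e : G))
      ∧ π g = star (ψ x) * ψ y := by
  have hK : IsCompact (tsupport ⇑x ∪ tsupport ⇑y) :=
    x.hasCompactSupport'.union y.hasCompactSupport'
  have hsupz : ∀ z : C_c(G, ℂ), (∀ e, z e ≠ 0 → (x e ≠ 0 ∨ y e ≠ 0)) → tsupport ⇑z ⊆ U := by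
    intro z h
    refine (closure_minimal ?_ (isClosed_closure.union isClosed_closure)).trans
      (Set.union_subset hx hy)
    intro e he
    rcases h e he with h' | h'
    · exact Or.inl (subset_closure h')
    · exact Or.inr (subset_closure h')
  have hsupz' : ∀ z : C_c(G, ℂ), (∀ e, z e ≠ 0 → (x e ≠ 0 ∨ y e ≠ 0)) →
      Function.support ⇑z ⊆ tsupport ⇑x ∪ tsupport ⇑y := by
    intro z h e he
    rcases h e he with h' | h'
    · exact Or.inl (subset_closure h')
    · exact Or.inr (subset_closure h')
  have c1 : ∀ e, (x + y) e ≠ 0 → (x e ≠ 0 ∨ y e ≠ 0) := by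
    intro e he
    by_contra hc
    push_neg at hc
    exact he (by simp [hc.1, hc.2])
  have c2 : ∀ e, (x + Complex.I • y) e ≠ 0 → (x e ≠ 0 ∨ y e ≠ 0) := by
    intro e he
    by_contra hc
    push_neg at hc
    exact he (by simp [hc.1, hc.2])
  have c3 : ∀ e, (x - y) e ≠ 0 → (x e ≠ 0 ∨ y e ≠ 0) := by
    intro e he
    by_contra hc
    push_neg at hc
    exact he (by simp [hc.1, hc.2])
  have c4 : ∀ e, (x - Complex.I • y) e ≠ 0 → (x e ≠ 0 ∨ y e ≠ 0) := by
    intro e he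
    by_contra hc
    push_neg at hc
    exact he (by simp [hc.1, hc.2])
  obtain ⟨g1, hg1, hπ1⟩ := inner_formula hs hT hU hsec (x + y) (hsupz _ c1)
  obtain ⟨g2, hg2, hπ2⟩ := inner_formula hs hT hU hsec (x + Complex.I • y) (hsupz _ c2)
  obtain ⟨g3, hg3, hπ3⟩ := inner_formula hs hT hU hsec (x - y) (hsupz _ c3)
  obtain ⟨g4, hg4, hπ4⟩ := inner_formula hs hT hU hsec (x - Complex.I • y) (hsupz _ c4)
  refine ⟨(1/4 : ℂ) • g1 + (-Complex.I/4) • g2 + (-1/4 : ℂ) • g3 + (Complex.I/4) • g4, ?_, ?_⟩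
  · intro v
    have hS : ∀ (z : C_c(G, ℂ)), (∀ e, z e ≠ 0 → (x e ≠ 0 ∨ y e ≠ 0)) →
        Summable (fun e : (s ⁻¹' {v} : Set G) => ((‖z (e : G)‖ : ℝ) : ℂ)^2) := by
      intro z h
      refine summable_fiber (α := ℂ) (F := fun e => ((‖z e‖ : ℝ) : ℂ)^2) hs hK ?_ v
      intro e he
      have : z e ≠ 0 := by
        simp only [Function.mem_support] at he
        intro h0; exact he (by simp [h0])
      exact hsupz' z h this
    have h1 := hS _ c1
    have h2 := hS _ c2
    have h3 := hS _ c3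
    have h4 := hS _ c4
    simp only [ZeroAtInftyContinuousMap.coe_add, ZeroAtInftyContinuousMap.coe_smul,
      Pi.add_apply, Pi.smul_apply, smul_eq_mul]
    rw [hg1 v, hg2 v, hg3 v, hg4 v]
    rw [← tsum_mul_left, ← tsum_mul_left, ← tsum_mul_left, ← tsum_mul_left]
    rw [← Summable.tsum_add (h1.mul_left _) (h2.mul_left _),
      ← Summable.tsum_add ((h1.mul_left _).add (h2.mul_left _)) (h3.mul_left _),
      ← Summable.tsum_add (((h1.mul_left _).add (h2.mul_left _)).add (h3.mul_left _)) (h4.mul_left _)]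
    refine tsum_congr ?_
    intro e
    simp only [CompactlySupportedContinuousMap.coe_add, CompactlySupportedContinuousMap.coe_sub,
      CompactlySupportedContinuousMap.coe_smul, Pi.add_apply, Pi.sub_apply, Pi.smul_apply,
      smul_eq_mul]
    exact polarC _ _
  · rw [map_add, map_add, map_add, map_smul, map_smul, map_smul, map_smul,
      hπ1, hπ2, hπ3, hπ4]
    simp only [map_add, map_sub, map_smul]
    exact polarB (ψ x) (ψ y)

lemma two_sections (hs : IsLocalHomeomorph s) (hT : IsToeplitzRep r s ψ π)
    {Ux Uy : Set G} (hUx : IsOpen Ux) (hUy : IsOpen Uy)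
    (hsecx : IsSSection s Ux) (hsecy : IsSSection s Uy) (x y : C_c(G, ℂ))
    (hx : tsupport ⇑x ⊆ Ux) (hy : tsupport ⇑y ⊆ Uy) :
    ∃ g : C₀(V, ℂ),
      (∀ v, g v = ∑' e : (s ⁻¹' {v} : Set G), (starRingEnd ℂ) (x (e : G)) * y (e : G))
      ∧ π g = star (ψ x) * ψ y := by
  classical
  set K := tsupport ⇑x ∩ tsupport ⇑y with hKdef
  have hKc : IsCompact K := x.hasCompactSupport'.inter_right isClosed_closure
  have hKsub : K ⊆ Ux ∩ Uy := Set.inter_subset_inter hx hy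
  obtain ⟨L, hLc, hKL, hLsub⟩ := exists_compact_between hKc (hUx.inter hUy) hKsub
  obtain ⟨M, hMc, hLM, hMsub⟩ := exists_compact_between hLc (hUx.inter hUy) hLsub
  obtain ⟨φ, hφ1, hφ0, hφc, hφmem⟩ := exists_continuous_one_zero_of_isCompact hLc
    isOpen_interior.isClosed_compl (Set.disjoint_left.mpr fun a haL hac => hac (hLM haL))
  set y1 := mulCc ⇑φ φ.continuous y with hy1def
  set y2 := mulCc (fun e => 1 - φ e) (continuous_const.sub φ.continuous) y with hy2def
  have hyadd : ⇑y = ⇑y1 + ⇑y2 := by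
    funext e
    simp only [mulCc_apply, Pi.add_apply, hy1def, hy2def]
    push_cast
    ring
  -- support facts
  have hy1supp : tsupport ⇑y1 ⊆ M := by
    refine closure_minimal ?_ hMc.isClosed
    intro e he
    simp only [Function.mem_support, hy1def, mulCc_apply] at he
    have hφe : φ e ≠ 0 := by
      intro h
      rw [h] at he
      simp at he
    have hmem : e ∈ interior M := by
      by_contra hc
      exact hφe (by simpa using hφ0 hc)
    exact interior_subset hmem
  have hy1Ux : tsupport ⇑y1 ⊆ Ux := hy1supp.trans (hMsub.trans Set.inter_subset_left)
  have hy2y : tsupport ⇑y2 ⊆ tsupport ⇑y := closure_mono (by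
    intro e he
    simp only [Function.mem_support, hy2def, mulCc_apply] at he ⊢
    intro h
    rw [h] at he
    simp at he)
  have hy2N : tsupport ⇑y2 ⊆ (interior L)ᶜ := by
    refine closure_minimal ?_ isOpen_interior.isClosed_compl
    intro e he hmem
    simp only [Function.mem_support, hy2def, mulCc_apply] at he
    have h1 : φ e = 1 := by simpa using hφ1 (interior_subset hmem)
    rw [h1] at he
    simp at he
  have hdisjsupp : Disjoint (tsupport ⇑x) (tsupport ⇑y2) := by
    rw [Set.disjoint_iff]
    rintro e ⟨he1, he2⟩
    exact hy2N he2 (hKL ⟨he1, hy2y he2⟩)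
  obtain ⟨A, Bo, hAopen, hBopen, hsubA, hsubB, hdisjAB⟩ :=
    SeparatedNhds.of_isCompact_isCompact x.hasCompactSupport' y2.hasCompactSupport' hdisjsupp
  have horth : star (ψ x) * ψ y2 = 0 :=
    hT.orth x y2 (A ∩ Ux) (Bo ∩ Uy) (hAopen.inter hUx) (hBopen.inter hUy)
      (hsecx.mono' Set.inter_subset_right) (hsecy.mono' Set.inter_subset_right)
      (Set.disjoint_of_subset Set.inter_subset_left Set.inter_subset_left hdisjAB)
      (Set.subset_inter hsubA hx) (Set.subset_inter hsubB (hy2y.trans hy))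
  obtain ⟨g1, hg1, hπ1⟩ := single_section hs hT hUx hsecx x y1 hx hy1Ux
  have hptwise : ∀ e : G, (starRingEnd ℂ) (x e) * y e = (starRingEnd ℂ) (x e) * y1 e := by
    intro e
    by_cases hxe : x e = 0
    · simp [hxe]
    by_cases hye : y e = 0
    · have : y1 e = 0 := by simp [hy1def, hye]
      rw [hye, this]
    have heK : e ∈ K := ⟨subset_closure hxe, subset_closure hye⟩
    have : φ e = 1 := by simpa using hφ1 (interior_subset (hKL heK))
    simp [hy1def, this]
  refine ⟨g1, fun v => ?_, ?_⟩
  · rw [hg1 v]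
    exact tsum_congr fun e => (hptwise (e : G)).symm
  · have : ψ y = ψ y1 + ψ y2 := by
      rw [← map_add]
      congr 1
      ext e
      have := congrFun hyadd e
      simpa using this
    rw [this, mul_add, horth, add_zero, hπ1]

lemma c0_sum_apply {ι : Type*} (t : Finset ι) (h : ι → C₀(V, ℂ)) (v : V) :
    (∑ i ∈ t, h i) v = ∑ i ∈ t, h i v := by
  classical
  induction t using Finset.induction_on with
  | empty => simp
  | insert a t' hni ih => simp [Finset.sum_insert hni, ih]

lemma pairing (hs : IsLocalHomeomorph s) (hT : IsToeplitzRep r s ψ π) (x y : C_c(G, ℂ)) :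
    ∃ g : C₀(V, ℂ),
      (∀ v, g v = ∑' e : (s ⁻¹' {v} : Set G), (starRingEnd ℂ) (x (e : G)) * y (e : G))
      ∧ π g = star (ψ x) * ψ y := by
  classical
  set K := tsupport ⇑x ∪ tsupport ⇑y with hKdef
  have hKc : IsCompact K := x.hasCompactSupport'.union y.hasCompactSupport'
  have hnb : ∀ e : G, ∃ U : Set G, IsOpen U ∧ e ∈ U ∧ IsSSection s U := by
    intro e
    obtain ⟨p, hp, hps⟩ := hs e
    refine ⟨p.source, p.open_source, hp, ?_⟩
    rw [IsSSection, hps]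
    exact p.isOpenEmbedding_restrict.toIsEmbedding
  choose U hUopen hUmem hUsec using hnb
  obtain ⟨t, ht⟩ := hKc.elim_finite_subcover (fun e : G => U e) hUopen
    (fun e _ => Set.mem_iUnion.mpr ⟨e, hUmem e⟩)
  set l := t.toList with hldef
  set n := l.length with hndef
  set Ufam : Fin n → Set G := fun i => U (l.get i) with hUfam
  have hcover : K ⊆ ⋃ i : Fin n, Ufam i := by
    intro a ha
    obtain ⟨e, het, haU⟩ := Set.mem_iUnion₂.mp (ht ha)
    obtain ⟨i, hi⟩ := List.mem_iff_get.mp (Finset.mem_toList.mpr het)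
    exact Set.mem_iUnion.mpr ⟨i, by simp only [hUfam, hldef]; rw [hi]; exact haU⟩
  obtain ⟨f, hfsub, hfsum, hfmem, hfcp⟩ :=
    exists_continuous_sum_one_of_isOpen_isCompact (fun i => hUopen (l.get i)) hKc hcover
  set xi : Fin n → C_c(G, ℂ) := fun i => mulCc ⇑(f i) (f i).continuous x with hxidef
  set yi : Fin n → C_c(G, ℂ) := fun i => mulCc ⇑(f i) (f i).continuous y with hyidef
  -- pointwise decomposition
  have hdecomp : ∀ (z : C_c(G, ℂ)), tsupport ⇑z ⊆ K →
      ∀ e, z e = ∑ i, (mulCc ⇑(f i) (f i).continuous z) e := by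
    intro z hz e
    by_cases hze : z e = 0
    · simp [mulCc_apply, hze]
    · have heK : e ∈ K := hz (subset_closure hze)
      have h1 : (∑ i, f i) e = 1 := by simpa using hfsum heK
      have h2 : (∑ i : Fin n, f i e) = 1 := by
        rw [← h1]; simp; rfl
      simp only [mulCc_apply]
      rw [← Finset.sum_mul, ← Complex.ofReal_sum, h2]
      simp
  have hxK : tsupport ⇑x ⊆ K := Set.subset_union_left
  have hyK : tsupport ⇑y ⊆ K := Set.subset_union_right
  have hxsum : x = ∑ i, xi i := by
    ext e
    rw [hdecomp x hxK e]
    simp [hxidef]; rfl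
  have hysum : y = ∑ i, yi i := by
    ext e
    rw [hdecomp y hyK e]
    simp [hyidef]; rfl
  -- supports of the pieces
  have hmulsup : ∀ (z : C_c(G, ℂ)) (i : Fin n),
      tsupport ⇑(mulCc ⇑(f i) (f i).continuous z) ⊆ Ufam i := by
    intro z i
    refine Set.Subset.trans (closure_mono ?_) (hfsub i)
    intro e he
    simp only [Function.mem_support, mulCc_apply] at he
    intro h0
    exact he (by rw [h0]; simp)
  have hsummable : ∀ (i j : Fin n) (v : V),
      Summable (fun e : (s ⁻¹' {v} : Set G) =>
        (starRingEnd ℂ) (xi i (e : G)) * yi j (e : G)) := by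
    intro i j v
    refine summable_fiber (α := ℂ)
      (F := fun e => (starRingEnd ℂ) (xi i e) * yi j e) hs hKc ?_ v
    intro e he
    simp only [Function.mem_support] at he
    have : x e ≠ 0 := by
      intro h0
      exact he (by simp [hxidef, mulCc_apply, h0])
    exact Or.inl (subset_closure this)
  have hpair : ∀ i j : Fin n, ∃ g : C₀(V, ℂ),
      (∀ v, g v = ∑' e : (s ⁻¹' {v} : Set G),
        (starRingEnd ℂ) (xi i (e : G)) * yi j (e : G))
      ∧ π g = star (ψ (xi i)) * ψ (yi j) :=
    fun i j => two_sections hs hT (hUopen _) (hUopen _) (hUsec _) (hUsec _) (xi i) (yi j)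
      (hmulsup x i) (hmulsup y j)
  choose gg hgg hπgg using hpair
  refine ⟨∑ p : Fin n × Fin n, gg p.1 p.2, ?_, ?_⟩
  · intro v
    rw [c0_sum_apply]
    rw [Finset.sum_congr rfl (fun (p : Fin n × Fin n) _ => hgg p.1 p.2 v)]
    rw [← Summable.tsum_finsetSum (fun (p : Fin n × Fin n) _ => hsummable p.1 p.2 v)]
    refine tsum_congr ?_
    intro e
    rw [Fintype.sum_prod_type]
    rw [hdecomp x hxK (e : G), hdecomp y hyK (e : G), map_sum, Finset.sum_mul_sum]
  · rw [map_sum]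
    rw [Finset.sum_congr rfl (fun (p : Fin n × Fin n) _ => hπgg p.1 p.2)]
    rw [hxsum, hysum, map_sum, map_sum, star_sum, Finset.sum_mul_sum]
    rw [Fintype.sum_prod_type]


end Statement4Main

/-- For any Toeplitz representation `(ψ, π)` of a topological graph,
`π(⟨x, y⟩) = ψ(x)* ψ(y)` for all `x, y ∈ C_c(E¹)`, and consequently
`‖ψ(x)‖ ≤ ‖x‖_{C₀(E⁰)}`. -/
theorem statement4 {V G : Type*} [TopologicalSpace V] [TopologicalSpace G]
    [LocallyCompactSpace V] [T2Space V] [LocallyCompactSpace G] [T2Space G]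
    (r s : G → V) (hr : Continuous r) (hs : IsLocalHomeomorph s)
    {B : Type*} [NonUnitalCStarAlgebra B]
    (ψ : C_c(G, ℂ) →ₗ[ℂ] B) (π : C₀(V, ℂ) →⋆ₙₐ[ℂ] B) (hT : IsToeplitzRep r s ψ π) :
    (∀ (x y : C_c(G, ℂ)) (g : C₀(V, ℂ)),
      (∀ v : V, g v = ∑' e : (s ⁻¹' {v} : Set G),
        starRingEnd ℂ (x (e : G)) * y (e : G)) →
      π g = star (ψ x) * ψ y) ∧
    ∀ x : C_c(G, ℂ), ‖ψ x‖ ≤ gnorm s ⇑x := by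
  constructor
  · intro x y g hgf
    obtain ⟨g0, hg0, hπ0⟩ := pairing hs hT x y
    have hgeq : g = g0 := by
      ext v
      rw [hgf v, hg0 v]
    rw [hgeq, hπ0]
  · intro x
    obtain ⟨g, hg, hπg⟩ := pairing hs hT x x
    have hsum : ∀ v : V, Summable (fun e : (s ⁻¹' {v} : Set G) => ‖x (e : G)‖ ^ 2) := by
      intro v
      refine summable_fiber (α := ℝ) (F := fun e => ‖x e‖ ^ 2) hs x.hasCompactSupport' ?_ v
      intro e he
      simp only [Function.mem_support] at he
      have : x e ≠ 0 := fun h => he (by simp [h])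
      exact subset_closure this
    set S : V → ℝ := fun v => ∑' e : (s ⁻¹' {v} : Set G), ‖x (e : G)‖ ^ 2 with hSdef
    have hgv : ∀ v, g v = ((S v : ℝ) : ℂ) := by
      intro v
      rw [hg v, hSdef]
      rw [Complex.ofReal_tsum]
      refine tsum_congr fun e => ?_
      rw [← Complex.normSq_eq_conj_mul_self, Complex.normSq_eq_norm_sq]
    have hSnn : ∀ v, 0 ≤ S v := fun v => tsum_nonneg (fun e => sq_nonneg _)
    have hnormg : ∀ v, ‖g v‖ = S v := by
      intro v
      rw [hgv v, Complex.norm_real]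
      exact abs_of_nonneg (hSnn v)
    have hb : BddAbove (Set.range fun v => Real.sqrt (S v)) := by
      refine ⟨Real.sqrt ‖g‖, ?_⟩
      rintro _ ⟨v, rfl⟩
      refine Real.sqrt_le_sqrt ?_
      rw [← hnormg v, ← ZeroAtInftyContinuousMap.norm_toBCF_eq_norm]
      exact g.toBCF.norm_coe_le_norm v
    have hgnx : gnorm s ⇑x = ⨆ v : V, Real.sqrt (S v) := rfl
    have hgn : (0 : ℝ) ≤ gnorm s ⇑x := by
      rw [hgnx]
      exact Real.iSup_nonneg (fun v => Real.sqrt_nonneg _)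
    have hglenorm : ‖g‖ ≤ (gnorm s ⇑x) ^ 2 := by
      rw [← ZeroAtInftyContinuousMap.norm_toBCF_eq_norm]
      refine (BoundedContinuousFunction.norm_le (by positivity)).mpr ?_
      intro v
      have h0 : ‖g.toBCF v‖ = S v := hnormg v
      rw [h0, ← Real.sq_sqrt (hSnn v)]
      have h1 : Real.sqrt (S v) ≤ gnorm s ⇑x := by
        rw [hgnx]
        exact le_ciSup hb v
      exact pow_le_pow_left₀ (Real.sqrt_nonneg _) h1 2
    have h2 : ‖ψ x‖ ^ 2 ≤ (gnorm s ⇑x) ^ 2 := by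
      have e1 : ‖ψ x‖ ^ 2 = ‖star (ψ x) * ψ x‖ := by
        rw [CStarRing.norm_star_mul_self, sq]
      rw [e1, ← hπg]
      exact (NonUnitalStarAlgHom.norm_apply_le π g).trans hglenorm
    calc ‖ψ x‖ = Real.sqrt (‖ψ x‖ ^ 2) := (Real.sqrt_sq (norm_nonneg _)).symm
      _ ≤ Real.sqrt ((gnorm s ⇑x) ^ 2) := Real.sqrt_le_sqrt h2
      _ = gnorm s ⇑x := Real.sqrt_sq hgn


end TopGraphPaper
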